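/- Let c > 0 and let v ∈ H¹_loc(ℝ) with e^{cy/2} v ∈ L²(ℝ) and e^{cy/2} v' ∈ L²(ℝ). Then for every y₁ ∈ ℝ one has the pointwise bound c · e^{c y₁} |v(y₁)|² ≤ ∫_{y₁}^∞ e^{cy} |v'(y)|² dy. -/

import Mathlib

open MeasureTheory Real Set Filter Topology

/-!
With `g y = e^{cy} v(y)²`, both `g` and `g' = e^{cy} (c v² + 2 v v')` are integrable, so `g`
vanishes at `+∞` and `g y₁ = -∫_{y₁}^∞ g'`. Completing the square,
`-c g' = e^{cy} v'² - e^{cy} (c v + v')² ≤ e^{cy} v'²`, which integrates to the bound.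
-/

theorem integrable_mul_mul_of_integrable_mul_sq {α : Type*} [MeasurableSpace α] {μ : Measure α}
    {w f g : α → ℝ} (hw : 0 ≤ w) (hwm : AEStronglyMeasurable w μ)
    (hfm : AEStronglyMeasurable f μ) (hgm : AEStronglyMeasurable g μ)
    (hf : Integrable (fun x => w x * f x ^ 2) μ) (hg : Integrable (fun x => w x * g x ^ 2) μ) :
    Integrable (fun x => w x * (f x * g x)) μ := by
  refine (hf.add hg).mono' (hwm.mul (hfm.mul hgm)) (Eventually.of_forall fun x => ?_)
  have hfg : |f x * g x| ≤ f x ^ 2 + g x ^ 2 :=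
    abs_le.2 ⟨by nlinarith [sq_nonneg (f x + g x)], by nlinarith [sq_nonneg (f x - g x)]⟩
  rw [Real.norm_eq_abs, abs_mul, abs_of_nonneg (hw x)]
  calc w x * |f x * g x| ≤ w x * (f x ^ 2 + g x ^ 2) := mul_le_mul_of_nonneg_left hfg (hw x)
    _ = w x * f x ^ 2 + w x * g x ^ 2 := by ring

theorem eq_neg_integral_Ioi_of_hasDerivAt_of_integrableOn {u u' : ℝ → ℝ} {a : ℝ}
    (hderiv : ∀ x ∈ Ici a, HasDerivAt u (u' x) x) (hu : IntegrableOn u (Ioi a))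
    (hu' : IntegrableOn u' (Ioi a)) :
    u a = -∫ x in Ioi a, u' x := by
  have hlim : Tendsto u atTop (𝓝 0) :=
    tendsto_zero_of_hasDerivAt_of_integrableOn_Ioi (fun x hx => hderiv x (mem_Ici_of_Ioi hx)) hu' hu
  rw [integral_Ioi_of_hasDerivAt_of_tendsto' hderiv hu' hlim]
  ring

theorem hasDerivAt_exp_mul_sq {v : ℝ → ℝ} {v₀ c y : ℝ} (hv : HasDerivAt v v₀ y) :
    HasDerivAt (fun y => exp (c * y) * v y ^ 2)
      (c * exp (c * y) * v y ^ 2 + exp (c * y) * (2 * v y * v₀)) y := by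
  have hexp : HasDerivAt (fun y => exp (c * y)) (c * exp (c * y)) y := by
    simpa [mul_comm] using ((hasDerivAt_id y).const_mul c).exp
  simpa using hexp.fun_mul (hv.fun_pow 2)

theorem weighted_trace_inequality_general
    (c : ℝ) (v v' : ℝ → ℝ)
    (hderiv : ∀ y, HasDerivAt v (v' y) y)
    (hv : Integrable (fun y => Real.exp (c * y) * (v y) ^ 2))
    (hv' : Integrable (fun y => Real.exp (c * y) * (v' y) ^ 2))
    (y₁ : ℝ) :
    c * Real.exp (c * y₁) * (v y₁) ^ 2
      ≤ ∫ y in Set.Ioi y₁, Real.exp (c * y) * (v' y) ^ 2 := by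
  set g' : ℝ → ℝ := fun y => c * exp (c * y) * v y ^ 2 + exp (c * y) * (2 * v y * v' y)
  have hv'_meas : Measurable v' := by
    simpa [funext fun y => (hderiv y).deriv] using measurable_deriv v
  have hv_cont : Continuous v :=
    continuous_iff_continuousAt.2 fun y => (hderiv y).continuousAt
  have hcross : Integrable (fun y => exp (c * y) * (v y * v' y)) :=
    integrable_mul_mul_of_integrable_mul_sq (fun y => (exp_pos _).le) (by fun_prop)
      hv_cont.aestronglyMeasurable hv'_meas.aestronglyMeasurable hv hv'
  have hg' : Integrable g' :=
    ((hv.const_mul c).add (hcross.const_mul 2)).congr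
      (Eventually.of_forall fun y => by simp only [g', Pi.add_apply]; ring)
  have htrace : exp (c * y₁) * v y₁ ^ 2 = -∫ y in Ioi y₁, g' y :=
    eq_neg_integral_Ioi_of_hasDerivAt_of_integrableOn
      (fun y _ => hasDerivAt_exp_mul_sq (hderiv y)) hv.integrableOn hg'.integrableOn
  rw [mul_assoc, htrace, mul_neg, ← integral_const_mul, ← integral_neg]
  refine setIntegral_mono_on (hg'.const_mul c).neg.integrableOn hv'.integrableOn
    measurableSet_Ioi fun y _ => ?_
  nlinarith [mul_nonneg (exp_pos (c * y)).le (sq_nonneg (c * v y + v' y))]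

/-- Weighted trace inequality in the space `H¹_c(ℝ)`:
`c e^{cy₁} |v(y₁)|² ≤ ∫_{y₁}^∞ e^{cy} |v'(y)|² dy`. -/
theorem weighted_trace_inequality
    (c : ℝ) (hc : 0 < c) (v v' : ℝ → ℝ)
    (hderiv : ∀ y, HasDerivAt v (v' y) y)
    (hv : Integrable (fun y => Real.exp (c * y) * (v y) ^ 2))
    (hv' : Integrable (fun y => Real.exp (c * y) * (v' y) ^ 2))
    (y₁ : ℝ) :
    c * Real.exp (c * y₁) * (v y₁) ^ 2
      ≤ ∫ y in Set.Ioi y₁, Real.exp (c * y) * (v' y) ^ 2 :=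
  weighted_trace_inequality_general c v v' hderiv hv hv' y₁
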